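/- There exists a finite simple graph E that is triangle-free and admits a proper 3-coloring, together with two distinct non-adjacent vertices p and q of E, such that every proper 3-coloring c of E satisfies c(p) = c(q). -/

import Mathlib

/-!
Take the Grötzsch graph, the Mycielskian of the 5-cycle, and delete the edge `p q` between two
adjacent vertices of the cycle. The result is triangle-free, and a proper 3-coloring of it with
`c p ≠ c q` would be a proper 3-coloring of the Grötzsch graph, which does not exist: given a
`(k + 1)`-coloring of a Mycielskian, recoloring every original vertex that carries the apex colour
with the colour of its shadow gives a `k`-coloring of the underlying graph, while the 5-cycle is
not 2-colorable.
-/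

namespace SimpleGraph

variable {V α : Type*} {G : SimpleGraph V}

theorem cliqueFree_three_iff :
    G.CliqueFree 3 ↔ ∀ a b c, G.Adj a b → G.Adj a c → G.Adj b c → False := by
  classical
  simp only [CliqueFree, is3Clique_iff]
  grind

variable (G) in
/-- The Mycielskian of `G`: `some (.inl v)` is the vertex `v` of `G`, `some (.inr v)` its shadow,
adjacent to the neighbours of `v`, and `none` the apex, adjacent to all shadows. -/
def mycielskian : SimpleGraph (Option (V ⊕ V)) where
  Adj
    | some (.inl u), some (.inl v) => G.Adj u v
    | some (.inl u), some (.inr v) | some (.inr v), some (.inl u) => G.Adj u v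
    | some (.inr _), none | none, some (.inr _) => True
    | _, _ => False
  symm := ⟨by rintro (_ | u | u) (_ | v | v) h <;> simp_all [G.adj_comm]⟩
  loopless := ⟨by rintro (_ | u | u) h <;> simp_all⟩

theorem mycielskian_adj_inl_inl {u v : V} :
    G.mycielskian.Adj (some (.inl u)) (some (.inl v)) ↔ G.Adj u v := Iff.rfl

theorem mycielskian_adj_inl_inr {u v : V} :
    G.mycielskian.Adj (some (.inl u)) (some (.inr v)) ↔ G.Adj u v := Iff.rfl

theorem mycielskian_adj_inr_none {v : V} : G.mycielskian.Adj (some (.inr v)) none := trivial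

instance [DecidableRel G.Adj] : DecidableRel G.mycielskian.Adj
  | some (.inl u), some (.inl v) => inferInstanceAs (Decidable (G.Adj u v))
  | some (.inl u), some (.inr v) => inferInstanceAs (Decidable (G.Adj u v))
  | some (.inr v), some (.inl u) => inferInstanceAs (Decidable (G.Adj u v))
  | some (.inr _), none => inferInstanceAs (Decidable True)
  | none, some (.inr _) => inferInstanceAs (Decidable True)
  | none, none => inferInstanceAs (Decidable False)
  | none, some (.inl _) => inferInstanceAs (Decidable False)
  | some (.inl _), none => inferInstanceAs (Decidable False)
  | some (.inr _), some (.inr _) => inferInstanceAs (Decidable False)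

theorem CliqueFree.mycielskian (h : G.CliqueFree 3) : G.mycielskian.CliqueFree 3 := by
  rw [cliqueFree_three_iff] at h ⊢
  rintro (_ | a | a) (_ | b | b) (_ | c | c) <;> simp [SimpleGraph.mycielskian]
  all_goals grind [G.adj_comm]

def Coloring.ofMycielskian [DecidableEq α] (c : G.mycielskian.Coloring α) :
    G.Coloring {a // a ≠ c none} :=
  Coloring.mk
    (fun v => if h : c (some (.inl v)) = c none
      then ⟨c (some (.inr v)), c.valid mycielskian_adj_inr_none⟩
      else ⟨c (some (.inl v)), h⟩)
    fun {u v} huv => by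
      split_ifs with hu hv hv <;> simp only [ne_eq, Subtype.mk.injEq]
      · exact absurd (hu.trans hv.symm) (c.valid (mycielskian_adj_inl_inl.mpr huv))
      · exact (c.valid (mycielskian_adj_inl_inr.mpr huv.symm)).symm
      · exact c.valid (mycielskian_adj_inl_inr.mpr huv)
      · exact c.valid (mycielskian_adj_inl_inl.mpr huv)

theorem Colorable.of_mycielskian {n : ℕ} (h : G.mycielskian.Colorable (n + 1)) :
    G.Colorable n := by
  classical
  obtain ⟨c⟩ := h
  simpa using c.ofMycielskian.colorable

theorem Coloring.eq_of_isEmpty_coloring_of_deleteEdges {u v : V} (hG : IsEmpty (G.Coloring α))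
    (c : (G.deleteEdges {s(u, v)}).Coloring α) : c u = c v := by
  by_contra hne
  refine hG.false (Coloring.mk c fun {a b} hab => ?_)
  by_cases he : s(a, b) = s(u, v)
  · rcases Sym2.eq_iff.mp he with ⟨rfl, rfl⟩ | ⟨rfl, rfl⟩
    exacts [hne, Ne.symm hne]
  · exact c.valid ((deleteEdges_adj ..).mpr ⟨hab, he⟩)

theorem cycleGraph_five_cliqueFree_three : (cycleGraph 5).CliqueFree 3 := by
  rw [cliqueFree_three_iff]
  decide

theorem cycleGraph_five_not_colorable_two : ¬ (cycleGraph 5).Colorable 2 := by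
  rw [← chromaticNumber_le_iff_colorable,
    chromaticNumber_cycleGraph_of_odd 5 (by norm_num) (by decide)]
  norm_num

end SimpleGraph

open SimpleGraph

theorem equality_gadget_exists :
    ∃ (W : Type) (_ : Fintype W) (E : SimpleGraph W) (p q : W),
      E.CliqueFree 3 ∧ E.Colorable 3 ∧ p ≠ q ∧ ¬ E.Adj p q ∧
      ∀ c : E.Coloring (Fin 3), c p = c q := by
  let p : Option (Fin 5 ⊕ Fin 5) := some (.inl 0)
  let q : Option (Fin 5 ⊕ Fin 5) := some (.inl 1)
  let E := (cycleGraph 5).mycielskian.deleteEdges {s(p, q)}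
  have grötzsch_not_colorable : IsEmpty ((cycleGraph 5).mycielskian.Coloring (Fin 3)) :=
    not_nonempty_iff.mp (mt Colorable.of_mycielskian cycleGraph_five_not_colorable_two)
  have E_colorable : E.Colorable 3 :=
    ⟨Coloring.mk (fun x => x.elim 0 (Sum.elim ![0, 0, 1, 2, 1] ![2, 2, 1, 2, 1]))
      fun {u v} => by revert u v; decide⟩
  refine ⟨_, inferInstance, E, p, q, cycleGraph_five_cliqueFree_three.mycielskian.anti
    (deleteEdges_le _), E_colorable, by decide, by simp [E],
    fun c => c.eq_of_isEmpty_coloring_of_deleteEdges grötzsch_not_colorable⟩
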